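/- arXiv:2009.10213 — 4 statements merged into one kernel-verified Lean document; each statement's English description precedes it below -/
import Mathlib

section
/- The n-th Catalan number satisfies (1/(n+1))·C(2n,n) = 4^{n+1} · (∫₀¹ xⁿ·√((1-x)/x) dx)/(2π). -/
open Real

lemma beta_eq_aux (n : ℕ) :
    (↑(∫ x in (0:ℝ)..1, x ^ n * Real.sqrt ((1 - x) / x)) : ℂ) =
      Complex.betaIntegral ((n : ℂ) + 1 / 2) (3 / 2) := by
  rw [← intervalIntegral.integral_ofReal, Complex.betaIntegral]
  apply intervalIntegral.integral_congr
  intro x hx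
  rw [Set.uIcc_of_le (zero_le_one' ℝ)] at hx
  obtain ⟨h0, h1⟩ := hx
  simp only
  rcases eq_or_lt_of_le h0 with h | h
  · rw [← h]
    rw [Complex.ofReal_zero, Complex.zero_cpow (by
      intro hc
      have h2 := congrArg Complex.re hc
      simp at h2
      rcases Nat.eq_zero_or_pos n with rfl | hn
      · norm_num at h2
      · have : (1:ℝ) ≤ (n:ℝ) := by exact_mod_cast hn
        linarith)]
    simp
  · have h1x : (0:ℝ) ≤ 1 - x := by linarith
    have key : x ^ n * Real.sqrt ((1 - x) / x)
        = x ^ ((n : ℝ) - 1/2) * (1 - x) ^ (1/2 : ℝ) := by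
      rw [Real.sqrt_div h1x x, Real.sqrt_eq_rpow, Real.sqrt_eq_rpow,
        Real.rpow_sub h, Real.rpow_natCast]
      ring
    rw [key, Complex.ofReal_mul, Complex.ofReal_cpow h.le, Complex.ofReal_cpow h1x]
    push_cast
    ring_nf

lemma gamma_half_val (n : ℕ) :
    Real.Gamma ((n : ℝ) + 1 / 2) = (2 * n).factorial * √π / (4 ^ n * n.factorial) := by
  have h := Real.Gamma_mul_Gamma_add_half ((n : ℝ) + 1 / 2)
  rw [show (n : ℝ) + 1 / 2 + 1 / 2 = (n : ℝ) + 1 by ring, Real.Gamma_nat_eq_factorial,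
    show 2 * ((n : ℝ) + 1 / 2) = ((2 * n : ℕ) : ℝ) + 1 by push_cast; ring,
    Real.Gamma_nat_eq_factorial,
    show (1 : ℝ) - (((2 * n : ℕ) : ℝ) + 1) = -((2 * n : ℕ) : ℝ) by ring,
    Real.rpow_neg (by norm_num), Real.rpow_natCast] at h
  have h4 : (2 : ℝ) ^ (2 * n) = 4 ^ n := by rw [pow_mul]; norm_num
  rw [h4] at h
  have hn : (n.factorial : ℝ) ≠ 0 := Nat.cast_ne_zero.mpr n.factorial_ne_zero
  rw [eq_div_iff (by positivity)]
  have h4' : (4 : ℝ) ^ n ≠ 0 := by positivity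
  field_simp at h
  rw [show ((n : ℝ) * 2 + 1) / 2 = (n : ℝ) + 1 / 2 by ring] at h
  linear_combination h

lemma gamma_three_half : Real.Gamma (3 / 2) = √π / 2 := by
  rw [show (3 / 2 : ℝ) = 1 / 2 + 1 by norm_num, Real.Gamma_add_one (by norm_num),
    Real.Gamma_one_half_eq]
  ring

lemma beta_val (n : ℕ) :
    Complex.betaIntegral ((n : ℂ) + 1 / 2) (3 / 2) =
      ((π * (2 * n).factorial / (2 * 4 ^ n * n.factorial * (n + 1).factorial) : ℝ) : ℂ) := by
  have hs : 0 < ((n : ℂ) + 1 / 2).re := by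
    simp only [Complex.add_re, Complex.natCast_re]
    norm_num
    positivity
  have ht : 0 < ((3 / 2 : ℂ)).re := by norm_num
  have hG := Complex.Gamma_mul_Gamma_eq_betaIntegral hs ht
  rw [show (n : ℂ) + 1 / 2 + 3 / 2 = ((n + 1 : ℕ) : ℂ) + 1 by push_cast; ring,
    Complex.Gamma_nat_eq_factorial] at hG
  have hne : (((n + 1).factorial : ℕ) : ℂ) ≠ 0 :=
    Nat.cast_ne_zero.mpr (n + 1).factorial_ne_zero
  have hB : Complex.betaIntegral ((n : ℂ) + 1 / 2) (3 / 2) =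
      Complex.Gamma ((n : ℂ) + 1 / 2) * Complex.Gamma (3 / 2) / (((n + 1).factorial : ℕ) : ℂ) := by
    rw [eq_div_iff hne]
    linear_combination hG.symm
  rw [hB, show ((n : ℂ) + 1 / 2) = (((n : ℝ) + 1 / 2 : ℝ) : ℂ) by push_cast; ring,
    show (3 / 2 : ℂ) = ((3 / 2 : ℝ) : ℂ) by norm_num,
    Complex.Gamma_ofReal, Complex.Gamma_ofReal, gamma_half_val, gamma_three_half,
    show (((n + 1).factorial : ℕ) : ℂ) = (((n + 1).factorial : ℝ) : ℂ) by push_cast; ring,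
    ← Complex.ofReal_mul, ← Complex.ofReal_div, Complex.ofReal_inj]
  have hss : √π * √π = π := Real.mul_self_sqrt pi_nonneg
  have h1 : ((n + 1).factorial : ℝ) ≠ 0 := Nat.cast_ne_zero.mpr (n + 1).factorial_ne_zero
  have h2 : (n.factorial : ℝ) ≠ 0 := Nat.cast_ne_zero.mpr n.factorial_ne_zero
  have h3 : (4 : ℝ) ^ n ≠ 0 := by positivity
  field_simp
  linear_combination hss

lemma int_val (n : ℕ) :
    (∫ x in (0:ℝ)..1, x ^ n * Real.sqrt ((1 - x) / x)) =
      π * (2 * n).factorial / (2 * 4 ^ n * n.factorial * (n + 1).factorial) := by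
  have h := beta_eq_aux n
  rw [beta_val] at h
  exact_mod_cast h

/-- Integral representation of the Catalan numbers:
`(1/(n+1))·C(2n,n) = 4^{n+1} · (∫₀¹ xⁿ √((1-x)/x) dx) / (2π)`. -/
theorem catalan_integral_formula (n : ℕ) :
    ((1 : ℝ) / (n + 1)) * (Nat.choose (2 * n) n : ℝ) =
      4 ^ (n + 1) * (∫ x in (0:ℝ)..1, x ^ n * Real.sqrt ((1 - x) / x)) / (2 * π) := by
  rw [int_val n]
  have hC : (((2 * n).choose n : ℕ) : ℝ) * n.factorial * n.factorial = (2 * n).factorial := by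
    have h := Nat.choose_mul_factorial_mul_factorial (show n ≤ 2 * n by omega)
    rw [show 2 * n - n = n by omega] at h
    exact_mod_cast h
  have h1 : ((n + 1).factorial : ℝ) = ((n : ℝ) + 1) * n.factorial := by
    push_cast [Nat.factorial_succ]; ring
  have h2 : (n.factorial : ℝ) ≠ 0 := Nat.cast_ne_zero.mpr n.factorial_ne_zero
  have h3 : (4 : ℝ) ^ n ≠ 0 := by positivity
  have hn1 : ((n : ℝ) + 1) ≠ 0 := by positivity
  have hπ : π ≠ 0 := pi_ne_zero
  rw [h1]
  field_simp
  linear_combination (4 * (4 : ℝ) ^ n) * hC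
end

section
/- Let μ_n = C(2m,m)/(m+1) if n = 2m is even and μ_n = 0 if n is odd. Define a bilinear form on polynomials by ⟨xⁱ, xʲ⟩ = μ_{i+j}. Then the Catalan polynomials Q_n defined by Q_{-1}=0, Q_0=1, Q_{n+1} = x·Q_n - Q_{n-1} satisfy ⟨Q_n, Q_m⟩ = 0 whenever n ≠ m. -/
/-- Catalan moments: `μ_{2m} = C(2m,m)/(m+1)`, `μ_{odd} = 0`. -/
noncomputable def catMoment (n : ℕ) : ℚ :=
  if Even n then (Nat.choose n (n / 2) : ℚ) / (n / 2 + 1) else 0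

/-- The bilinear "moment" pairing determined by `⟨xⁱ, xʲ⟩ = μ_{i+j}`. -/
noncomputable def momForm (μ : ℕ → ℚ) (p q : Polynomial ℚ) : ℚ :=
  ∑ i ∈ Finset.range (p.natDegree + 1), ∑ j ∈ Finset.range (q.natDegree + 1),
    p.coeff i * q.coeff j * μ (i + j)

/-- Catalan polynomials: `Q 0 = 1`, `Q 1 = x`, `Q (n+2) = x Q (n+1) - Q n`. -/
noncomputable def catPoly : ℕ → Polynomial ℚ
  | 0 => 1
  | 1 => Polynomial.X
  | n + 2 => Polynomial.X * catPoly (n + 1) - catPoly n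

open Polynomial Finset

/-- The linear functional `L(∑ aₖ xᵏ) = ∑ aₖ μₖ` for the Catalan moments. -/
noncomputable def catL : Polynomial ℚ →ₗ[ℚ] ℚ :=
  Polynomial.lsum (fun k => LinearMap.toSpanSingleton ℚ ℚ (catMoment k))

lemma catL_monomial (k : ℕ) (a : ℚ) : catL (Polynomial.monomial k a) = a * catMoment k := by
  simp [catL, Polynomial.lsum_apply, Polynomial.sum_monomial_index,
    LinearMap.toSpanSingleton_apply, smul_eq_mul]

lemma catL_X_pow (k : ℕ) : catL (Polynomial.X ^ k) = catMoment k := by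
  rw [Polynomial.X_pow_eq_monomial, catL_monomial, one_mul]

lemma catL_X_pow_mul (i : ℕ) (q : Polynomial ℚ) :
    catL (Polynomial.X ^ i * q) = q.sum (fun j a => a * catMoment (i + j)) := by
  induction q using Polynomial.induction_on' with
  | add p q hp hq =>
    rw [mul_add, map_add, hp, hq, Polynomial.sum_add_index]
    · intro n; simp
    · intro n a b; ring
  | monomial j a =>
    rw [Polynomial.X_pow_eq_monomial, Polynomial.monomial_mul_monomial, one_mul,
      catL_monomial, Polynomial.sum_monomial_index]
    simp

lemma catL_X_pow_mul_range (i : ℕ) (q : Polynomial ℚ) :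
    catL (Polynomial.X ^ i * q)
      = ∑ j ∈ Finset.range (q.natDegree + 1), q.coeff j * catMoment (i + j) := by
  rw [catL_X_pow_mul, Polynomial.sum_over_range' _ (by intro n; simp) (q.natDegree + 1)
    (Nat.lt_succ_self _)]

lemma momForm_eq (μ : ℕ → ℚ) (p q : Polynomial ℚ) (hμ : μ = catMoment) :
    momForm μ p q = ∑ i ∈ Finset.range (p.natDegree + 1),
      p.coeff i * catL (Polynomial.X ^ i * q) := by
  subst hμ
  unfold momForm
  refine Finset.sum_congr rfl fun i _ => ?_
  rw [catL_X_pow_mul_range, Finset.mul_sum]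
  exact Finset.sum_congr rfl fun j _ => by ring

lemma momForm_symm (μ : ℕ → ℚ) (p q : Polynomial ℚ) : momForm μ p q = momForm μ q p := by
  unfold momForm
  rw [Finset.sum_comm]
  refine Finset.sum_congr rfl fun j _ => Finset.sum_congr rfl fun i _ => ?_
  rw [add_comm i j]; ring

/-- Ballot numbers (as rationals): paths of length `i` from `0` to `n` staying `≥ 0`. -/
noncomputable def F (i n : ℕ) : ℚ :=
  if (i + n) % 2 = 0 then
    (Nat.choose i ((i + n) / 2) : ℚ) - (Nat.choose i ((i + n) / 2 + 1) : ℚ)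
  else 0

lemma F_eq_zero_of_lt {i n : ℕ} (h : i < n) : F i n = 0 := by
  unfold F
  split_ifs with hp
  · have hu : i < (i + n) / 2 := by omega
    rw [Nat.choose_eq_zero_of_lt hu, Nat.choose_eq_zero_of_lt (by omega)]
    simp
  · rfl

lemma F_zero (i : ℕ) : F i 0 = catMoment i := by
  unfold F catMoment
  rcases Nat.even_or_odd i with he | ho
  · obtain ⟨u, hu⟩ := he
    have h2 : i = 2 * u := by omega
    subst h2
    have hpar : (2 * u + 0) % 2 = 0 := by omega
    rw [if_pos hpar, if_pos (by exact ⟨u, by ring⟩)]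
    have hdiv : (2 * u + 0) / 2 = u := by omega
    have hdiv2 : 2 * u / 2 = u := by omega
    rw [hdiv, hdiv2]
    have key : (Nat.choose (2 * u) (u + 1) : ℚ) * (u + 1) = (Nat.choose (2 * u) u : ℚ) * u := by
      have := Nat.choose_succ_right_eq (2 * u) u
      have h' : (2 * u).choose (u + 1) * (u + 1) = (2 * u).choose u * u := by
        rw [this]; congr 1; omega
      exact_mod_cast congrArg (fun x : ℕ => (x : ℚ)) h'
    have hne : ((u : ℚ) + 1) ≠ 0 := by positivity
    field_simp
    push_cast
    nlinarith [key]
  · obtain ⟨k, hk⟩ := ho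
    subst hk
    rw [if_neg (by omega), if_neg (by rw [Nat.even_iff]; omega)]

lemma F_one (i : ℕ) : F i 1 = F (i + 1) 0 := by
  unfold F
  rcases Nat.even_or_odd i with he | ho
  · obtain ⟨u, hu⟩ := he
    subst hu
    rw [if_neg (by omega), if_neg (by omega)]
  · obtain ⟨k, hk⟩ := ho
    subst hk
    rw [if_pos (by omega), if_pos (by omega)]
    have h1 : (2 * k + 1 + 1) / 2 = k + 1 := by omega
    rw [h1]
    have hp1 : (2 * k + 1 + 1).choose (k + 1)
        = (2 * k + 1).choose k + (2 * k + 1).choose (k + 1) := Nat.choose_succ_succ _ _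
    have hp2 : (2 * k + 1 + 1).choose (k + 1 + 1)
        = (2 * k + 1).choose (k + 1) + (2 * k + 1).choose (k + 2) := Nat.choose_succ_succ _ _
    have hsym : (2 * k + 1).choose k = (2 * k + 1).choose (k + 1) := by
      rw [← Nat.choose_symm (by omega)]; congr 1; omega
    rw [hp1, hp2, hsym]
    push_cast
    ring

lemma F_rec (i n : ℕ) : F (i + 1) (n + 1) = F i n + F i (n + 2) := by
  unfold F
  rcases Nat.even_or_odd (i + n) with he | ho
  · obtain ⟨s, hs⟩ := he
    rw [if_pos (by omega), if_pos (by omega), if_pos (by omega)]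
    have h1 : (i + 1 + (n + 1)) / 2 = s + 1 := by omega
    have h2 : (i + n) / 2 = s := by omega
    have h3 : (i + (n + 2)) / 2 = s + 1 := by omega
    rw [h1, h2, h3]
    have hp1 : (i + 1).choose (s + 1) = i.choose s + i.choose (s + 1) := Nat.choose_succ_succ _ _
    have hp2 : (i + 1).choose (s + 1 + 1) = i.choose (s + 1) + i.choose (s + 2) :=
      Nat.choose_succ_succ _ _
    rw [hp1, hp2]
    push_cast
    ring
  · obtain ⟨k, hk⟩ := ho
    rw [if_neg (by omega), if_neg (by omega), if_neg (by omega)]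
    ring

lemma catL_key : ∀ n i, catL (Polynomial.X ^ i * catPoly n) = F i n := by
  intro n
  induction n using Nat.strong_induction_on with
  | _ n ih =>
    match n with
    | 0 =>
      intro i
      show catL (Polynomial.X ^ i * 1) = F i 0
      rw [mul_one, catL_X_pow, F_zero]
    | 1 =>
      intro i
      show catL (Polynomial.X ^ i * Polynomial.X) = F i 1
      rw [F_one, ← pow_succ, catL_X_pow, ← F_zero]
    | (k + 2) =>
      intro i
      show catL (Polynomial.X ^ i * (Polynomial.X * catPoly (k + 1) - catPoly k)) = F i (k + 2)
      have : Polynomial.X ^ i * (Polynomial.X * catPoly (k + 1) - catPoly k)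
          = Polynomial.X ^ (i + 1) * catPoly (k + 1) - Polynomial.X ^ i * catPoly k := by
        ring
      rw [this, map_sub, ih (k + 1) (by omega) (i + 1), ih k (by omega) i, F_rec]
      ring

lemma natDegree_catPoly_le : ∀ n, (catPoly n).natDegree ≤ n := by
  intro n
  induction n using Nat.strong_induction_on with
  | _ n ih =>
    match n with
    | 0 => simp [catPoly]
    | 1 => simp [catPoly]
    | (k + 2) =>
      show (Polynomial.X * catPoly (k + 1) - catPoly k).natDegree ≤ k + 2
      refine le_trans (Polynomial.natDegree_sub_le _ _) ?_
      have h1 : (Polynomial.X * catPoly (k + 1)).natDegree ≤ k + 2 := by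
        refine le_trans (Polynomial.natDegree_mul_le) ?_
        have := ih (k + 1) (by omega)
        simpa using by omega
      have h2 : (catPoly k).natDegree ≤ k + 2 := le_trans (ih k (by omega)) (by omega)
      omega

lemma momForm_lt {n m : ℕ} (h : n < m) :
    momForm catMoment (catPoly n) (catPoly m) = 0 := by
  rw [momForm_eq _ _ _ rfl]
  refine Finset.sum_eq_zero fun i hi => ?_
  rw [catL_key]
  have hi' : i ≤ (catPoly n).natDegree := Nat.lt_succ_iff.mp (Finset.mem_range.mp hi)
  have : i < m := lt_of_le_of_lt (le_trans hi' (natDegree_catPoly_le n)) h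
  rw [F_eq_zero_of_lt this, mul_zero]

/-- The Catalan polynomials are orthogonal for the Catalan-moment pairing. -/
theorem catPoly_orthogonal (n m : ℕ) (h : n ≠ m) :
    momForm catMoment (catPoly n) (catPoly m) = 0 := by
  rcases lt_or_gt_of_ne h with hlt | hgt
  · exact momForm_lt hlt
  · rw [momForm_symm]; exact momForm_lt hgt
end

section
/- With moments μ_n equal to the Catalan number C_{m} = C(2m,m)/(m+1) when n=2m and 0 when n is odd, the (n+1)×(n+1) Hankel determinant det(μ_{i+j})_{0≤i,j≤n} equals 1 for all n ≥ 0. -/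
/-- Ballot numbers: number of nonnegative lattice paths of length `n` ending at height `k`. -/
noncomputable def bal (n k : ℕ) : ℚ :=
  if Even (n + k) then
    (Nat.choose n ((n + k) / 2) : ℚ) - (Nat.choose n ((n + k) / 2 + 1) : ℚ)
  else 0

lemma bal_eq_zero_of_lt {n k : ℕ} (h : n < k) : bal n k = 0 := by
  unfold bal
  split_ifs with hp
  · obtain ⟨s, hs⟩ := hp
    have h1 : n < (n + k) / 2 := by omega
    rw [Nat.choose_eq_zero_of_lt h1, Nat.choose_eq_zero_of_lt (by omega)]
    simp
  · rfl

lemma bal_diag (n : ℕ) : bal n n = 1 := by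
  unfold bal
  rw [if_pos ⟨n, rfl⟩]
  have h1 : (n + n) / 2 = n := by omega
  rw [h1, Nat.choose_self, Nat.choose_eq_zero_of_lt (by omega)]
  simp

lemma bal_zero_zero : bal 0 0 = 1 := bal_diag 0

lemma bal_succ_zero (n : ℕ) : bal (n + 1) 0 = bal n 1 := by
  unfold bal
  rcases Nat.even_or_odd n with he | ho
  · rw [if_neg, if_neg]
    · simpa [Nat.even_add_one] using he
    · simpa [Nat.even_add_one] using he
  · obtain ⟨t, rfl⟩ := ho
    have hev1 : Even (2 * t + 1 + 1 + 0) := ⟨t + 1, by omega⟩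
    have hev2 : Even (2 * t + 1 + 1) := ⟨t + 1, by omega⟩
    rw [if_pos hev1, if_pos hev2]
    have h1 : (2 * t + 1 + 1 + 0) / 2 = t + 1 := by omega
    have h2 : (2 * t + 1 + 1) / 2 = t + 1 := by omega
    simp only [h1, h2]
    have p1 : Nat.choose (2 * t + 1 + 1) (t + 1) = Nat.choose (2 * t + 1) t + Nat.choose (2 * t + 1) (t + 1) :=
      Nat.choose_succ_succ (2 * t + 1) t
    have p2 : Nat.choose (2 * t + 1 + 1) (t + 1 + 1) = Nat.choose (2 * t + 1) (t + 1) + Nat.choose (2 * t + 1) (t + 2) :=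
      Nat.choose_succ_succ (2 * t + 1) (t + 1)
    have sym : Nat.choose (2 * t + 1) t = Nat.choose (2 * t + 1) (t + 1) := by
      have h0 := Nat.choose_symm (by omega : t ≤ 2 * t + 1)
      have h3 : 2 * t + 1 - t = t + 1 := by omega
      rw [h3] at h0
      exact h0.symm
    rw [p1, p2, sym]
    push_cast
    ring

lemma bal_succ_succ (n k : ℕ) : bal (n + 1) (k + 1) = bal n k + bal n (k + 2) := by
  unfold bal
  rcases Nat.even_or_odd (n + k) with he | ho
  · obtain ⟨s, hs⟩ := he
    have hev1 : Even (n + 1 + (k + 1)) := ⟨s + 1, by omega⟩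
    have hev2 : Even (n + k) := ⟨s, by omega⟩
    have hev3 : Even (n + (k + 2)) := ⟨s + 1, by omega⟩
    rw [if_pos hev1, if_pos hev2, if_pos hev3]
    have h1 : (n + 1 + (k + 1)) / 2 = s + 1 := by omega
    have h2 : (n + k) / 2 = s := by omega
    have h3 : (n + (k + 2)) / 2 = s + 1 := by omega
    rw [h1, h2, h3]
    have p1 : Nat.choose (n + 1) (s + 1) = Nat.choose n s + Nat.choose n (s + 1) :=
      Nat.choose_succ_succ n s
    have p2 : Nat.choose (n + 1) (s + 2) = Nat.choose n (s + 1) + Nat.choose n (s + 2) :=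
      Nat.choose_succ_succ n (s + 1)
    rw [p1, p2]
    push_cast
    ring
  · rw [if_neg, if_neg, if_neg]
    · simp
    · rcases ho with ⟨s, hs⟩
      rintro ⟨u, hu⟩; omega
    · rcases ho with ⟨s, hs⟩
      rintro ⟨u, hu⟩; omega
    · rcases ho with ⟨s, hs⟩
      rintro ⟨u, hu⟩; omega

lemma bal_zero_right (n : ℕ) : bal n 0 = catMoment n := by
  unfold bal catMoment
  rcases Nat.even_or_odd n with he | ho
  · obtain ⟨t, rfl⟩ := he
    rw [if_pos (by simpa using he), if_pos ⟨t, rfl⟩]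
    have h1 : (t + t + 0) / 2 = t := by omega
    have h2 : (t + t) / 2 = t := by omega
    rw [h1, h2]
    have key : Nat.choose (t + t) (t + 1) * (t + 1) = Nat.choose (t + t) t * t := by
      have := Nat.choose_succ_right_eq (t + t) t
      simpa [Nat.add_sub_cancel] using this
    have hkey : ((Nat.choose (t + t) (t + 1) : ℚ)) * (t + 1) = (Nat.choose (t + t) t : ℚ) * t := by
      exact_mod_cast congrArg (Nat.cast : ℕ → ℚ) key
    have ht : ((t : ℚ) + 1) ≠ 0 := by positivity
    field_simp
    push_cast
    nlinarith [hkey]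
  · obtain ⟨t, rfl⟩ := ho
    rw [if_neg, if_neg]
    · rintro ⟨u, hu⟩; omega
    · rintro ⟨u, hu⟩; omega

/-- Truncated inner product of rows of ballot numbers. -/
noncomputable def balS (N i j : ℕ) : ℚ := ∑ k ∈ Finset.range N, bal i k * bal j k

lemma balS_symm (N i j : ℕ) : balS N i j = balS N j i := by
  unfold balS
  exact Finset.sum_congr rfl fun k _ => mul_comm _ _

lemma balS_trunc {N i : ℕ} (j : ℕ) (h : i < N) : balS N i j = balS (i + 1) i j := by
  unfold balS
  refine (Finset.sum_subset ?_ ?_).symm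
  · intro k hk
    simp only [Finset.mem_range] at *
    omega
  · intro k hk hk'
    simp only [Finset.mem_range] at *
    rw [bal_eq_zero_of_lt (by omega)]
    ring

lemma balS_expand {M i : ℕ} (j : ℕ) (hi : i ≤ M) :
    balS (M + 1) (i + 1) j =
      (∑ k ∈ Finset.range M, bal i k * bal j (k + 1)) +
      (∑ k ∈ Finset.range M, bal i (k + 1) * bal j k) := by
  unfold balS
  rw [Finset.sum_range_succ' (fun k => bal (i + 1) k * bal j k) M]
  have step : ∀ k, bal (i + 1) (k + 1) * bal j (k + 1) =
      bal i k * bal j (k + 1) + bal i (k + 2) * bal j (k + 1) := by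
    intro k; rw [bal_succ_succ]; ring
  rw [Finset.sum_congr rfl fun k _ => step k, Finset.sum_add_distrib, bal_succ_zero]
  have shifted : (∑ k ∈ Finset.range M, bal i (k + 2) * bal j (k + 1)) + bal i 1 * bal j 0 =
      ∑ k ∈ Finset.range (M + 1), bal i (k + 1) * bal j k := by
    rw [Finset.sum_range_succ' (fun k => bal i (k + 1) * bal j k) M]
  have last : ∑ k ∈ Finset.range (M + 1), bal i (k + 1) * bal j k =
      ∑ k ∈ Finset.range M, bal i (k + 1) * bal j k := by
    rw [Finset.sum_range_succ, bal_eq_zero_of_lt (by omega : i < M + 1)]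
    ring
  calc (∑ k ∈ Finset.range M, bal i k * bal j (k + 1)) +
        (∑ k ∈ Finset.range M, bal i (k + 2) * bal j (k + 1)) + bal i 1 * bal j 0
      = (∑ k ∈ Finset.range M, bal i k * bal j (k + 1)) +
        ((∑ k ∈ Finset.range M, bal i (k + 2) * bal j (k + 1)) + bal i 1 * bal j 0) := by ring
    _ = _ := by rw [shifted, last]

lemma balS_shift {M i j : ℕ} (hi : i ≤ M) (hj : j ≤ M) :
    balS (M + 1) (i + 1) j = balS (M + 1) i (j + 1) := by
  rw [balS_expand j hi, balS_symm, balS_expand i hj]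
  conv_rhs => rw [add_comm]
  congr 1
  · exact Finset.sum_congr rfl fun k _ => mul_comm _ _
  · exact Finset.sum_congr rfl fun k _ => mul_comm _ _

lemma balS_eq_catMoment : ∀ i j N : ℕ, i < N → balS N i j = catMoment (i + j) := by
  intro i
  induction i with
  | zero =>
    intro j N hN
    rw [balS_trunc j hN]
    unfold balS
    rw [Finset.sum_range_one, bal_zero_zero, one_mul, bal_zero_right]
    simp
  | succ i ih =>
    intro j N hN
    rw [balS_trunc j hN, ← balS_trunc j (by omega : i + 1 < i + j + 2)]
    have : (i + j + 2 : ℕ) = (i + j + 1) + 1 := rfl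
    rw [this, balS_shift (by omega) (by omega), ← this,
      balS_trunc (j + 1) (by omega : i < i + j + 2),
      ← balS_trunc (j + 1) (by omega : i < i + 1), ih (j + 1) (i + 1) (by omega)]
    congr 1
    omega

/-- The Hankel determinant of the Catalan moments equals 1. -/
theorem catalan_hankel_det (n : ℕ) :
    Matrix.det (Matrix.of fun i j : Fin (n + 1) => catMoment ((i : ℕ) + (j : ℕ))) = 1 := by
  set L : Matrix (Fin (n + 1)) (Fin (n + 1)) ℚ :=
    Matrix.of (fun i k : Fin (n + 1) => bal (i : ℕ) (k : ℕ)) with hL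
  have hfact : (Matrix.of fun i j : Fin (n + 1) => catMoment ((i : ℕ) + (j : ℕ)))
      = L * L.transpose := by
    ext i j
    simp only [Matrix.mul_apply, Matrix.transpose_apply, hL, Matrix.of_apply]
    rw [Fin.sum_univ_eq_sum_range (fun k => bal (i : ℕ) k * bal (j : ℕ) k) (n + 1)]
    exact (balS_eq_catMoment (i : ℕ) (j : ℕ) (n + 1) i.isLt).symm
  have hLtri : L.BlockTriangular OrderDual.toDual := by
    intro i j hij
    simp only [OrderDual.toDual_lt_toDual] at hij
    exact bal_eq_zero_of_lt (by exact_mod_cast hij)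
  have hdetL : L.det = 1 := by
    rw [Matrix.det_of_lowerTriangular L hLtri]
    have : ∀ i : Fin (n + 1), L i i = 1 := fun i => bal_diag (i : ℕ)
    simp [this]
  rw [hfact, Matrix.det_mul, Matrix.det_transpose, hdetL]
  norm_num
end

section
/- Let ν_n = (-1)^m·C(2m,m)/(m+1) for n = 2m and ν_n = 0 for n odd. The determinant of the (n+1)×(n+1) matrix whose first n rows are (ν_{i+j})_{j=0}^n for i = 0,…,n−1 and whose last row is (ν_{n+1+j})_{j=0}^n equals 0. -/
/-- Signed Catalan moments: `ν_{2m} = (-1)^m C(2m,m)/(m+1)`, `ν_{odd} = 0`. -/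
noncomputable def sgnMoment (n : ℕ) : ℚ :=
  if Even n then (-1) ^ (n / 2) * (Nat.choose n (n / 2) : ℚ) / (n / 2 + 1) else 0

lemma sgnMoment_even_of_ne_zero {k : ℕ} (h : sgnMoment k ≠ 0) : Even k := by
  unfold sgnMoment at h
  split at h
  · assumption
  · exact absurd rfl h

/-- The shifted Hankel determinant of the signed Catalan moments (last row
replaced by `ν_{n+1}, …, ν_{2n+1}`) equals 0. -/
theorem signed_catalan_shifted_hankel_det (n : ℕ) :
    Matrix.det (Matrix.of fun i j : Fin (n + 1) =>
      if (i : ℕ) = n then sgnMoment (n + 1 + (j : ℕ))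
      else sgnMoment ((i : ℕ) + (j : ℕ))) = 0 := by
  rw [Matrix.det_apply]
  apply Finset.sum_eq_zero
  intro σ _
  apply smul_eq_zero_of_right
  by_contra hprod
  have hne : ∀ i : Fin (n + 1),
      (Matrix.of fun i j : Fin (n + 1) =>
        if (i : ℕ) = n then sgnMoment (n + 1 + (j : ℕ))
        else sgnMoment ((i : ℕ) + (j : ℕ))) (σ i) i ≠ 0 := by
    intro i h0
    exact hprod (Finset.prod_eq_zero (Finset.mem_univ i) h0)
  set L : Fin (n + 1) := σ.symm ⟨n, Nat.lt_succ_self n⟩ with hL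
  have hσL : ((σ L : ℕ)) = n := by rw [hL, Equiv.apply_symm_apply]
  -- parity of entries
  have hEven : ∀ i : Fin (n + 1), i ≠ L → Even ((i : ℕ) + (σ i : ℕ)) := by
    intro i hi
    have h := hne i
    simp only [Matrix.of_apply] at h
    rw [if_neg] at h
    · rw [Nat.add_comm]; exact sgnMoment_even_of_ne_zero h
    · intro hc
      apply hi
      rw [hL]
      apply σ.injective.eq_iff.mp ∘ id
      rw [Equiv.apply_symm_apply]
      exact Fin.ext hc
  have hOddL : Odd ((L : ℕ) + (σ L : ℕ)) := by
    have h := hne L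
    simp only [Matrix.of_apply] at h
    rw [if_pos hσL] at h
    have he : Even (n + 1 + (L : ℕ)) := sgnMoment_even_of_ne_zero h
    rw [hσL]
    rcases he with ⟨r, hr⟩
    refine ⟨r - 1, ?_⟩
    omega
  -- total sum is even
  have htot : Even (∑ i : Fin (n + 1), ((i : ℕ) + (σ i : ℕ))) := by
    rw [Finset.sum_add_distrib]
    have h2 : ∑ i : Fin (n + 1), ((σ i : ℕ)) = ∑ i : Fin (n + 1), (i : ℕ) :=
      Equiv.sum_comp σ (fun i => (i : ℕ))
    rw [h2]
    exact ⟨_, rfl⟩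
  -- but the sum splits as even part + odd term
  have hsplit : ∑ i : Fin (n + 1), ((i : ℕ) + (σ i : ℕ)) =
      (∑ i ∈ Finset.univ.erase L, ((i : ℕ) + (σ i : ℕ))) + ((L : ℕ) + (σ L : ℕ)) :=
    (Finset.sum_erase_add _ _ (Finset.mem_univ L)).symm
  have hErest : Even (∑ i ∈ Finset.univ.erase L, ((i : ℕ) + (σ i : ℕ))) := by
    apply Finset.even_sum
    intro i hi
    exact hEven i (Finset.ne_of_mem_erase hi)
  rw [hsplit] at htot
  rcases htot with ⟨a, ha⟩
  rcases hErest with ⟨b, hb⟩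
  rcases hOddL with ⟨c, hc⟩
  omega
end
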